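/- arXiv:2506.17593 — 3 statements merged into one kernel-verified Lean document; each statement's English description precedes it below -/
import Mathlib

section
/- For every integer $k \geq 1$ and all integers $0 \leq a, b \leq k-1$, one has $k\cdot\max(a,b) - (a^2+b^2-ab) \leq k\cdot\lfloor 2k/3 \rfloor - \left(\lfloor 2k/3\rfloor^2 + \lfloor k/3\rfloor^2 - \lfloor 2k/3\rfloor\lfloor k/3\rfloor\right)$. -/
/-! Completing squares, `4 (k² - 3 (k a - (a² + b² - a b))) = (2k - 3a)² + 3 (a - 2b)²`, so every
value of `k a - (a² + b² - a b)` on integers is at most `k² / 3`.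
At `(⌊2k/3⌋, ⌊k/3⌋)` the value is `⌊k² / 3⌋`, as one checks for each residue of `k` mod 3. -/

theorem three_mul_sub_le_sq (k a b : ℤ) : 3 * (k * a - (a ^ 2 + b ^ 2 - a * b)) ≤ k ^ 2 := by
  nlinarith [sq_nonneg (2 * k - 3 * a), sq_nonneg (a - 2 * b)]

theorem sq_le_three_mul_add_one (k : ℤ) :
    k ^ 2 ≤ 3 * (k * (2 * k / 3) - ((2 * k / 3) ^ 2 + (k / 3) ^ 2 - (2 * k / 3) * (k / 3))) + 1 := by
  obtain ⟨q, rfl | rfl | rfl⟩ : ∃ q, k = 3 * q ∨ k = 3 * q + 1 ∨ k = 3 * q + 2 :=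
    ⟨k / 3, by omega⟩
  · rw [show 2 * (3 * q) / 3 = 2 * q by omega, show 3 * q / 3 = q by omega]
    nlinarith
  · rw [show 2 * (3 * q + 1) / 3 = 2 * q by omega, show (3 * q + 1) / 3 = q by omega]
    nlinarith
  · rw [show 2 * (3 * q + 2) / 3 = 2 * q + 1 by omega, show (3 * q + 2) / 3 = q by omega]
    nlinarith

theorem stmt8_general (k a b : ℤ) :
    k * max a b - (a ^ 2 + b ^ 2 - a * b)
      ≤ k * (2 * k / 3) - ((2 * k / 3) ^ 2 + (k / 3) ^ 2 - (2 * k / 3) * (k / 3)) := by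
  have h_attained := sq_le_three_mul_add_one k
  rcases max_choice a b with h | h <;> rw [h]
  · have := three_mul_sub_le_sq k a b
    omega
  · have := three_mul_sub_le_sq k b a
    rw [show b ^ 2 + a ^ 2 - b * a = a ^ 2 + b ^ 2 - a * b by ring] at this
    omega

/-- The maximal conformal weight among the modules `M^{0,0-(a,b)}` of `K(sl₃,k)` is
attained at `(⌊2k/3⌋, ⌊k/3⌋)`. -/
theorem stmt8 (k a b : ℤ) (hk : 1 ≤ k) (ha0 : 0 ≤ a) (ha : a ≤ k - 1)
    (hb0 : 0 ≤ b) (hb : b ≤ k - 1) :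
    k * max a b - (a ^ 2 + b ^ 2 - a * b)
      ≤ k * (2 * k / 3) - ((2 * k / 3) ^ 2 + (k / 3) ^ 2 - (2 * k / 3) * (k / 3)) :=
  stmt8_general k a b
end

section
/- Let $r \geq 1$ and $k \geq 2$ be integers. For every tuple $(a_1,\ldots,a_r)$ of integers with $0 \leq a_i \leq k-1$ for all $i$, not all zero, one has $\sum_{i=1}^r a_i^2 - \sum_{1 \leq i < j \leq r} a_i a_j \;\leq\; k \cdot \max_{1\leq i \leq r} a_i \;-\; (k-1)$. -/
/-!
Twice the left-hand side is `3 ∑ aᵢ² - (∑ aᵢ)²`. Splitting off a coordinate where the maximum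
`M` is attained, and writing `T` and `U` for the sum and the sum of squares of the remaining ones,
this is `2M² + 3U - 2MT - T²`, and `U ≤ MT`, `U ≤ T²` give the bound `M²`. Finally
`M² ≤ kM - (k - 1)` is `(M - 1)(k - 1 - M) ≥ 0`, where `M ≥ 1` because `a ≠ 0`.
-/

open Finset

section PairSums

variable {ι R : Type*} [Fintype ι] [LinearOrder ι]

theorem two_mul_sum_ite_lt_mul [CommRing R] (a : ι → R) :
    2 * ∑ i, ∑ j, (if i < j then a i * a j else 0) = (∑ i, a i) ^ 2 - ∑ i, a i ^ 2 := by
  have hsplit : ∀ i j, a i * a j = (if i < j then a i * a j else 0)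
      + (if j < i then a j * a i else 0) + (if i = j then a i * a j else 0) := by
    intro i j
    rcases lt_trichotomy i j with h | rfl | h
    · simp [h, h.ne, h.not_gt]
    · simp
    · simp [h, h.ne', h.not_gt, mul_comm]
  have hdiag : ∑ i, ∑ j, (if i = j then a i * a j else 0) = ∑ i, a i ^ 2 := by
    simp [sq]
  rw [sq, sum_mul_sum, sum_congr rfl fun i _ => sum_congr rfl fun j _ => hsplit i j]
  simp only [sum_add_distrib, hdiag]
  rw [sum_comm (f := fun i j => if j < i then a j * a i else 0)]
  ring

variable [CommRing R] [LinearOrder R] [IsStrictOrderedRing R]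

theorem sum_sq_sub_sum_ite_lt_mul_le_sq (a : ι → R) (h0 : ∀ j, 0 ≤ a j) (i₀ : ι)
    (hmax : ∀ j, a j ≤ a i₀) :
    ∑ i, a i ^ 2 - ∑ i, ∑ j, (if i < j then a i * a j else 0) ≤ a i₀ ^ 2 := by
  set M := a i₀
  set T := ∑ j ∈ univ.erase i₀, a j
  set U := ∑ j ∈ univ.erase i₀, a j ^ 2
  have hS : ∑ i, a i = M + T := (add_sum_erase _ a (mem_univ i₀)).symm
  have hQ : ∑ i, a i ^ 2 = M ^ 2 + U := (add_sum_erase _ (a · ^ 2) (mem_univ i₀)).symm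
  have hT : 0 ≤ T := sum_nonneg fun j _ => h0 j
  have hUT : U ≤ T ^ 2 := sum_sq_le_sq_sum_of_nonneg fun j _ => h0 j
  have hUM : U ≤ M * T := by
    rw [mul_sum]
    exact sum_le_sum fun j _ => by rw [sq]; exact mul_le_mul_of_nonneg_right (hmax j) (h0 j)
  have hpairs := two_mul_sum_ite_lt_mul a
  rw [hS, hQ] at hpairs
  linarith

end PairSums

theorem stmt9_general (r : ℕ) (k : ℤ) (hr : 0 < r)
    (a : Fin r → ℤ) (ha : ∀ i, 0 ≤ a i ∧ a i ≤ k - 1) (hne : a ≠ 0) :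
    (∑ i, (a i) ^ 2) - (∑ i, ∑ j, if i < j then a i * a j else 0)
      ≤ k * Finset.univ.sup' (Finset.univ_nonempty_iff.mpr (Fin.pos_iff_nonempty.mp hr)) a
          - (k - 1) := by
  obtain ⟨i₀, -, hi₀⟩ := exists_mem_eq_sup' (univ_nonempty_iff.mpr (Fin.pos_iff_nonempty.mp hr)) a
  rw [hi₀]
  have hmax : ∀ j, a j ≤ a i₀ := fun j => hi₀ ▸ le_sup' a (mem_univ j)
  obtain ⟨i, hi⟩ := Function.ne_iff.mp hne
  have hpos : 1 ≤ a i₀ := ((ha i).1.lt_of_ne' hi).trans_le (hmax i)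
  calc _ ≤ a i₀ ^ 2 := sum_sq_sub_sum_ite_lt_mul_le_sq a (fun j => (ha j).1) i₀ hmax
    _ ≤ k * a i₀ - (k - 1) := by linarith [mul_nonneg (sub_nonneg.2 hpos) (sub_nonneg.2 (ha i₀).2)]

/-- For `r ≥ 1`, `k ≥ 2`, and a not-all-zero tuple `0 ≤ aᵢ ≤ k-1`:
`∑ aᵢ² - ∑_{i<j} aᵢaⱼ ≤ k·max aᵢ - (k-1)`. -/
theorem stmt9 (r : ℕ) (k : ℤ) (hr : 0 < r) (hk : 2 ≤ k)
    (a : Fin r → ℤ) (ha : ∀ i, 0 ≤ a i ∧ a i ≤ k - 1) (hne : a ≠ 0) :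
    (∑ i, (a i) ^ 2) - (∑ i, ∑ j, if i < j then a i * a j else 0)
      ≤ k * Finset.univ.sup' (Finset.univ_nonempty_iff.mpr (Fin.pos_iff_nonempty.mp hr)) a
          - (k - 1) :=
  stmt9_general r k hr a ha hne
end

section
/- Let $r \geq 3$ and $k \geq 1$ be integers. For every tuple $(a_1,\ldots,a_r)$ of integers with $0 \leq a_i \leq k-1$, define $f(a_\bullet) = k\cdot\max_i a_i - \left(\sum_{i=1}^r a_i^2 - \sum_{1\leq i<j\leq r} a_i a_j\right)$. Then $f(a_\bullet) \leq f(k-1, k-1, \ldots, k-1) = k(k-1) + (k-1)^2\,\frac{r(r-3)}{2}$. -/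
/-!
Writing `s = ∑ aᵢ` and `q = ∑ aᵢ²`, one has `2 f(a) = 2k·max a + s² - 3q`.
Cauchy–Schwarz `s² ≤ r q` gives `r (s² - 3q) ≤ (r - 3) s²`, which for `r ≥ 3` is increasing in
`s ≤ r (k - 1)`; both this term and `k·max a` are therefore maximal at the constant tuple `k - 1`.
-/

/-- `f(a_•) = k·maxᵢ aᵢ - (∑ aᵢ² - ∑_{i<j} aᵢaⱼ)`. -/
def pf10 (r : ℕ) (hr : 0 < r) (k : ℤ) (a : Fin r → ℤ) : ℤ :=
  k * Finset.univ.sup' (Finset.univ_nonempty_iff.mpr (Fin.pos_iff_nonempty.mp hr)) a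
    - ((∑ i, (a i) ^ 2) - (∑ i, ∑ j, if i < j then a i * a j else 0))

section SumOfProducts

variable {ι R : Type*} [Fintype ι] [LinearOrder ι] [CommRing R]

theorem two_mul_sum_sum_ite_lt_mul (a : ι → R) :
    2 * (∑ i, ∑ j, if i < j then a i * a j else 0) = (∑ i, a i) ^ 2 - ∑ i, a i ^ 2 := by
  have hsplit (i j : ι) : a i * a j = ((if i < j then a i * a j else 0)
      + (if j < i then a i * a j else 0)) + (if i = j then a i * a j else 0) := by
    rcases lt_trichotomy i j with h | rfl | h
    · simp [h, h.ne, h.not_gt]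
    · simp
    · simp [h, h.ne', h.not_gt]
  have hswap : (∑ i, ∑ j, if j < i then a i * a j else 0)
      = ∑ i, ∑ j, if i < j then a i * a j else 0 := by
    rw [Finset.sum_comm]
    simp only [mul_comm]
  have hdiag : (∑ i, ∑ j, if i = j then a i * a j else 0) = ∑ i, a i ^ 2 := by
    simp [sq]
  rw [sq, Finset.sum_mul_sum, Finset.sum_congr rfl fun i _ => Finset.sum_congr rfl fun j _ => hsplit i j]
  simp only [Finset.sum_add_distrib, hswap, hdiag]
  ring

end SumOfProducts

theorem two_mul_pf10 (r : ℕ) (hr : 0 < r) (hne : (Finset.univ : Finset (Fin r)).Nonempty)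
    (k : ℤ) (a : Fin r → ℤ) :
    2 * pf10 r hr k a = 2 * (k * Finset.univ.sup' hne a) + (∑ i, a i) ^ 2 - 3 * ∑ i, a i ^ 2 := by
  have := two_mul_sum_sum_ite_lt_mul a
  unfold pf10
  linarith

theorem two_mul_pf10_const (r : ℕ) (hr : 0 < r) (k c : ℤ) :
    2 * pf10 r hr k (fun _ => c) = 2 * (k * c) + c ^ 2 * ((r : ℤ) * ((r : ℤ) - 3)) := by
  rw [two_mul_pf10 r hr (Finset.univ_nonempty_iff.mpr ⟨⟨0, hr⟩⟩), Finset.sup'_const]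
  simp only [Finset.sum_const, Finset.card_univ, Fintype.card_fin, nsmul_eq_mul]
  ring

theorem sq_sum_sub_three_mul_sum_sq_le {ι : Type*} [Fintype ι] (h3 : 3 ≤ Fintype.card ι)
    {a : ι → ℤ} {c : ℤ} (ha : ∀ i, 0 ≤ a i ∧ a i ≤ c) :
    (∑ i, a i) ^ 2 - 3 * ∑ i, a i ^ 2
      ≤ c ^ 2 * ((Fintype.card ι : ℤ) * ((Fintype.card ι : ℤ) - 3)) := by
  set r : ℤ := (Fintype.card ι : ℤ)
  set s := ∑ i, a i
  have hr : 3 ≤ r := Nat.ofNat_le_cast.mpr h3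
  have hcs : s ^ 2 ≤ r * ∑ i, a i ^ 2 := sq_sum_le_card_mul_sum_sq
  have hs0 : 0 ≤ s := Finset.sum_nonneg fun i _ => (ha i).1
  have hsle : s ≤ r * c := by
    simpa [r, mul_comm] using Finset.sum_le_sum fun i (_ : i ∈ Finset.univ) => (ha i).2
  have hsq : (r - 3) * s ^ 2 ≤ (r - 3) * (r * c) ^ 2 :=
    mul_le_mul_of_nonneg_left (pow_le_pow_left₀ hs0 hsle 2) (by linarith)
  refine le_of_mul_le_mul_left ?_ (show 0 < r by linarith)
  nlinarith

theorem pf10_le_pf10_const {r : ℕ} (hr : 3 ≤ r) {k c : ℤ} (hk : 0 ≤ k)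
    {a : Fin r → ℤ} (ha : ∀ i, 0 ≤ a i ∧ a i ≤ c) :
    pf10 r (by omega) k a ≤ pf10 r (by omega) k (fun _ => c) := by
  have hne : (Finset.univ : Finset (Fin r)).Nonempty :=
    Finset.univ_nonempty_iff.mpr ⟨⟨0, by omega⟩⟩
  have hmax : k * Finset.univ.sup' hne a ≤ k * c :=
    mul_le_mul_of_nonneg_left (Finset.sup'_le _ _ fun i _ => (ha i).2) hk
  have hquad := sq_sum_sub_three_mul_sum_sq_le (by simpa using hr) ha
  rw [Fintype.card_fin] at hquad
  have := two_mul_pf10 r (by omega) hne k a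
  have := two_mul_pf10_const r (by omega) k c
  linarith

/-- For `r ≥ 3`, `k ≥ 1`: `f(a_•) ≤ f(k-1,…,k-1) = k(k-1) + (k-1)² r(r-3)/2`. -/
theorem stmt10 (r : ℕ) (k : ℤ) (hr : 3 ≤ r) (hk : 1 ≤ k)
    (a : Fin r → ℤ) (ha : ∀ i, 0 ≤ a i ∧ a i ≤ k - 1) :
    pf10 r (by omega) k a ≤ pf10 r (by omega) k (fun _ => k - 1) ∧
    2 * pf10 r (by omega) k (fun _ => k - 1)
      = 2 * (k * (k - 1)) + (k - 1) ^ 2 * ((r : ℤ) * ((r : ℤ) - 3)) :=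
  ⟨pf10_le_pf10_const hr (by omega) ha, two_mul_pf10_const r _ k (k - 1)⟩
end
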